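/- arXiv:0910.3064 — 2 statements merged into one kernel-verified Lean document; each statement's English description precedes it below -/
import Mathlib

section
/- Let X be a Banach space and B : X × X → X a bilinear operator such that ‖B(x₁,x₂)‖ ≤ η‖x₁‖‖x₂‖ for all x₁, x₂ ∈ X, where η > 0. Then for any y ∈ X with 4η‖y‖ < 1, the equation x = y + B(x,x) has a solution x ∈ X, and this solution is the unique one satisfying ‖x‖ ≤ (1 - √(1 - 4η‖y‖))/(2η). -/
/-!
The smaller root `r = (1 - √(1 - 4η‖y‖)) / (2η)` of `η r² - r + ‖y‖ = 0` makes the closed ball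
of radius `r` invariant under `T x = y + B(x, x)`. Since `B(a, a) - B(b, b) = B(a, a - b) + B(a - b, b)`,
the map `T` is Lipschitz on that ball with constant `2ηr = 1 - √(1 - 4η‖y‖) < 1`, so the Banach
fixed point theorem gives a fixed point of `T` in the ball, unique there.
-/

open Function Metric Set

theorem LipschitzOnWith.existsUnique_isFixedPt_of_mapsTo {α : Type*} [MetricSpace α]
    {K : NNReal} {f : α → α} {s : Set α} (hf : LipschitzOnWith K f s) (hK : K < 1)
    (hsc : IsComplete s) (hne : s.Nonempty) (hsf : MapsTo f s s) :
    ∃! x, x ∈ s ∧ IsFixedPt f x := by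
  have : CompleteSpace s := hsc.completeSpace_coe
  have : Nonempty s := hne.to_subtype
  have hc : ContractingWith K (hsf.restrict f s s) :=
    ⟨hK, hsf.lipschitzOnWith_iff_restrict.mp hf⟩
  set p := ContractingWith.fixedPoint _ hc
  refine ⟨p, ⟨p.2, congrArg Subtype.val hc.fixedPoint_isFixedPt⟩, ?_⟩
  rintro z ⟨hzs, hz⟩
  exact congrArg Subtype.val (hc.fixedPoint_unique (x := ⟨z, hzs⟩) (Subtype.ext hz))

section Bilinear

variable {R E F : Type*} [CommRing R] [NormedAddCommGroup E] [SeminormedAddCommGroup F]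
  [Module R E] [Module R F] {η : ℝ}

theorem LinearMap.norm_apply_self_sub_apply_self_le (B : E →ₗ[R] E →ₗ[R] F)
    (hB : ∀ a b, ‖B a b‖ ≤ η * ‖a‖ * ‖b‖) (a b : E) :
    ‖B a a - B b b‖ ≤ η * (‖a‖ + ‖b‖) * ‖a - b‖ := by
  have hsplit : B a a - B b b = B a (a - b) + B (a - b) b := by
    simp only [map_sub, LinearMap.sub_apply]
    abel
  calc ‖B a a - B b b‖ ≤ ‖B a (a - b)‖ + ‖B (a - b) b‖ := hsplit ▸ norm_add_le _ _
    _ ≤ η * ‖a‖ * ‖a - b‖ + η * ‖a - b‖ * ‖b‖ := add_le_add (hB _ _) (hB _ _)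
    _ = η * (‖a‖ + ‖b‖) * ‖a - b‖ := by ring

variable (B : E →ₗ[R] E →ₗ[R] E) (hB : ∀ a b, ‖B a b‖ ≤ η * ‖a‖ * ‖b‖) (hη : 0 ≤ η) (y : E)
  {r : ℝ}
include hB hη

theorem LinearMap.mapsTo_closedBall_add_apply_self (hr : η * r ^ 2 + ‖y‖ ≤ r) :
    MapsTo (fun x => y + B x x) (closedBall 0 r) (closedBall 0 r) := by
  intro x hx
  rw [mem_closedBall_zero_iff] at hx ⊢
  calc ‖y + B x x‖ ≤ ‖y‖ + ‖B x x‖ := norm_add_le _ _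
    _ ≤ ‖y‖ + η * ‖x‖ ^ 2 := by rw [sq, ← mul_assoc]; exact add_le_add_right (hB x x) _
    _ ≤ ‖y‖ + η * r ^ 2 := by gcongr
    _ ≤ r := by linarith

theorem LinearMap.lipschitzOnWith_closedBall_add_apply_self :
    LipschitzOnWith (2 * η * r).toNNReal (fun x => y + B x x) (closedBall 0 r) := by
  refine LipschitzOnWith.of_dist_le' fun a ha b hb => ?_
  rw [mem_closedBall_zero_iff] at ha hb
  rw [dist_eq_norm, dist_eq_norm, add_sub_add_left_eq_sub]
  calc ‖B a a - B b b‖ ≤ η * (‖a‖ + ‖b‖) * ‖a - b‖ := B.norm_apply_self_sub_apply_self_le hB a b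
    _ ≤ η * (r + r) * ‖a - b‖ := by gcongr
    _ = 2 * η * r * ‖a - b‖ := by ring

theorem LinearMap.existsUnique_eq_add_apply_self [CompleteSpace E] (hr0 : 0 ≤ r)
    (hr : η * r ^ 2 + ‖y‖ ≤ r) (hK : 2 * η * r < 1) :
    ∃! x, x ∈ closedBall 0 r ∧ x = y + B x x := by
  simpa only [IsFixedPt, eq_comm (a := y + B _ _)] using
    (B.lipschitzOnWith_closedBall_add_apply_self hB hη y).existsUnique_isFixedPt_of_mapsTo
      (Real.toNNReal_lt_one.mpr hK) isClosed_closedBall.isComplete (nonempty_closedBall.mpr hr0)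
      (B.mapsTo_closedBall_add_apply_self hB hη y hr)

end Bilinear

section QuadraticRoot

/-- The smaller root of `η r² - r + c = 0`. -/
noncomputable def quadraticSmallRoot (η c : ℝ) : ℝ := (1 - √(1 - 4 * η * c)) / (2 * η)

variable {η c : ℝ}

theorem two_mul_mul_quadraticSmallRoot (hη : η ≠ 0) :
    2 * η * quadraticSmallRoot η c = 1 - √(1 - 4 * η * c) := by
  unfold quadraticSmallRoot
  field_simp

theorem quadraticSmallRoot_nonneg (hη : 0 < η) (hc : 0 ≤ c) : 0 ≤ quadraticSmallRoot η c := by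
  have : √(1 - 4 * η * c) ≤ 1 := Real.sqrt_le_one.mpr (by nlinarith)
  unfold quadraticSmallRoot
  exact div_nonneg (by linarith) (by linarith)

theorem two_mul_mul_quadraticSmallRoot_lt_one (hη : η ≠ 0) (hc : 4 * η * c < 1) :
    2 * η * quadraticSmallRoot η c < 1 := by
  rw [two_mul_mul_quadraticSmallRoot hη]
  linarith [Real.sqrt_pos.mpr (sub_pos.mpr hc)]

theorem mul_quadraticSmallRoot_sq_add (hη : η ≠ 0) (hc : 4 * η * c ≤ 1) :
    η * quadraticSmallRoot η c ^ 2 + c = quadraticSmallRoot η c := by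
  have hroot := two_mul_mul_quadraticSmallRoot (c := c) hη
  have hsq := Real.sq_sqrt (sub_nonneg.mpr hc)
  have h4η : 4 * η ≠ 0 := by positivity
  apply mul_left_cancel₀ h4η
  linear_combination (2 * η * quadraticSmallRoot η c - 1 - √(1 - 4 * η * c)) * hroot + hsq

end QuadraticRoot

/-- Picard/fixed-point lemma for quadratic equations in a Banach space:
if `B` is bilinear with `‖B x₁ x₂‖ ≤ η ‖x₁‖ ‖x₂‖` and `4η‖y‖ < 1`, then
`x = y + B x x` has a solution, unique among those with
`‖x‖ ≤ (1 - √(1 - 4η‖y‖)) / (2η)`. -/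
theorem stmt_0 {X : Type*} [NormedAddCommGroup X] [NormedSpace ℝ X] [CompleteSpace X]
    (B : X →ₗ[ℝ] X →ₗ[ℝ] X) (η : ℝ) (hη : 0 < η)
    (hB : ∀ x₁ x₂ : X, ‖B x₁ x₂‖ ≤ η * ‖x₁‖ * ‖x₂‖)
    (y : X) (hy : 4 * η * ‖y‖ < 1) :
    ∃ x : X, x = y + B x x ∧ ‖x‖ ≤ (1 - Real.sqrt (1 - 4 * η * ‖y‖)) / (2 * η) ∧
      ∀ z : X, z = y + B z z → ‖z‖ ≤ (1 - Real.sqrt (1 - 4 * η * ‖y‖)) / (2 * η) → z = x := by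
  change ∃ x : X, x = y + B x x ∧ ‖x‖ ≤ quadraticSmallRoot η ‖y‖ ∧
    ∀ z : X, z = y + B z z → ‖z‖ ≤ quadraticSmallRoot η ‖y‖ → z = x
  obtain ⟨x, ⟨hx_mem, hx_eq⟩, hx_unique⟩ := B.existsUnique_eq_add_apply_self hB hη.le y
    (quadraticSmallRoot_nonneg hη (norm_nonneg y))
    (mul_quadraticSmallRoot_sq_add hη.ne' hy.le).le
    (two_mul_mul_quadraticSmallRoot_lt_one hη.ne' hy)
  exact ⟨x, hx_eq, mem_closedBall_zero_iff.mp hx_mem,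
    fun z hz hzr => hx_unique z ⟨mem_closedBall_zero_iff.mpr hzr, hz⟩⟩
end

section
/- Let γ be a multi-index and t ≥ 0, Ω ∈ ℝ. Then the function ξ ↦ e^{iΩ t ξ₃/|ξ|} on ℝ³ \ {0} satisfies |∂^γ (e^{iΩ t ξ₃/|ξ|})| ≤ C |ξ|^{-|γ|} (1 + |Ω| t)^{|γ|} for a constant C depending only on γ. -/
/-!
The phase `ξ₃/|ξ|` is invariant under positive dilations, so by the chain rule for the
linear dilation `ζ ↦ |ξ|⁻¹ζ` the `n`-th derivative at `ξ` has norm at most `|ξ|⁻ⁿ` times that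
of the `n`-th derivative at the unit vector `ξ/|ξ|`. On the compact unit sphere the phase is smooth, so its derivatives up to order
`n` are bounded by some `K`, while the `i`-th derivative of `y ↦ e^{iay}` has norm `|a|ⁱ`;
Faà di Bruno's bound then gives `n! (1 + |a|)ⁿ Kⁿ` there, uniformly in `a = Ωt`.
-/

open Complex Set

section Homogeneous

variable {E F : Type*} [NormedAddCommGroup E] [NormedSpace ℝ E]
  [NormedAddCommGroup F] [NormedSpace ℝ F]

theorem norm_iteratedFDeriv_le_of_forall_smul_eq {f : E → F}
    (hf : ∀ c : ℝ, 0 < c → ∀ x, f (c • x) = f x) (n : ℕ) {x : E} (hx : x ≠ 0) :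
    ‖iteratedFDeriv ℝ n f x‖ ≤ ‖iteratedFDeriv ℝ n f (‖x‖⁻¹ • x)‖ * ‖x‖⁻¹ ^ n := by
  have hc : 0 < ‖x‖⁻¹ := inv_pos.2 (norm_pos_iff.2 hx)
  let e : E ≃L[ℝ] E := ContinuousLinearEquiv.smulLeft (Units.mk0 _ hc.ne')
  have he : ∀ y, e y = ‖x‖⁻¹ • y := fun _ => rfl
  have hfe : f ∘ e = f := funext fun y => by simp only [Function.comp_apply, he, hf _ hc]
  have he_norm : ‖(e : E →L[ℝ] E)‖ ≤ ‖x‖⁻¹ :=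
    ContinuousLinearMap.opNorm_le_bound _ hc.le fun y => by
      simp only [ContinuousLinearEquiv.coe_coe, he, norm_smul, Real.norm_of_nonneg hc.le, le_refl]
  calc ‖iteratedFDeriv ℝ n f x‖
      = ‖(iteratedFDeriv ℝ n f (e x)).compContinuousLinearMap fun _ => (e : E →L[ℝ] E)‖ := by
        simp only [← iteratedFDerivWithin_univ]
        rw [← e.iteratedFDerivWithin_comp_right f uniqueDiffOn_univ (mem_univ _), hfe,
          preimage_univ]
    _ ≤ ‖iteratedFDeriv ℝ n f (e x)‖ * ∏ _ : Fin n, ‖(e : E →L[ℝ] E)‖ :=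
        ContinuousMultilinearMap.norm_compContinuousLinearMap_le _ _
    _ ≤ ‖iteratedFDeriv ℝ n f (‖x‖⁻¹ • x)‖ * ‖x‖⁻¹ ^ n := by
        rw [Finset.prod_const, Finset.card_univ, Fintype.card_fin, he]
        gcongr

theorem div_norm_smul_eq (ℓ : E →L[ℝ] ℝ) {c : ℝ} (hc : 0 < c) (x : E) :
    ℓ (c • x) / ‖c • x‖ = ℓ x / ‖x‖ := by
  rw [map_smul, norm_smul, Real.norm_of_nonneg hc.le, smul_eq_mul,
    mul_div_mul_left _ _ hc.ne']

end Homogeneous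

theorem contDiffOn_div_norm {E : Type*} [NormedAddCommGroup E] [InnerProductSpace ℝ E]
    (ℓ : E →L[ℝ] ℝ) {n : WithTop ℕ∞} : ContDiffOn ℝ n (fun x => ℓ x / ‖x‖) {0}ᶜ :=
  ℓ.contDiff.contDiffOn.div (fun _ hx => (contDiffAt_norm ℝ hx).contDiffWithinAt)
    fun _ hx => norm_ne_zero_iff.2 hx

theorem IsCompact.exists_bound_norm_iteratedFDerivWithin {𝕜 E F : Type*}
    [NontriviallyNormedField 𝕜] [NormedAddCommGroup E] [NormedSpace 𝕜 E]
    [NormedAddCommGroup F] [NormedSpace 𝕜 F]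
    {f : E → F} {s k : Set E} {n : ℕ} (hk : IsCompact k) (hf : ContDiffOn 𝕜 n f s)
    (hs : UniqueDiffOn 𝕜 s) (hks : k ⊆ s) :
    ∃ K, ∀ i ≤ n, ∀ x ∈ k, ‖iteratedFDerivWithin 𝕜 i f s x‖ ≤ K := by
  have hcont : ContinuousOn
      (fun x => ∑ i ∈ Finset.range (n + 1), ‖iteratedFDerivWithin 𝕜 i f s x‖) k :=
    continuousOn_finsetSum _ fun i hi =>
      ((hf.continuousOn_iteratedFDerivWithin (by exact_mod_cast Finset.mem_range_succ_iff.1 hi)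
        hs).mono hks).norm
  obtain ⟨K, hK⟩ := hk.exists_bound_of_continuousOn hcont
  refine ⟨K, fun i hi x hx => ?_⟩
  calc ‖iteratedFDerivWithin 𝕜 i f s x‖
      ≤ ∑ j ∈ Finset.range (n + 1), ‖iteratedFDerivWithin 𝕜 j f s x‖ :=
        Finset.single_le_sum (f := fun j => ‖iteratedFDerivWithin 𝕜 j f s x‖)
          (fun _ _ => norm_nonneg _) (Finset.mem_range_succ_iff.2 hi)
    _ ≤ K := (Real.le_norm_self _).trans (hK x hx)

theorem iteratedDeriv_cexp_const_mul_ofReal (c : ℂ) (i : ℕ) :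
    iteratedDeriv i (fun y : ℝ => cexp (c * y)) = fun y : ℝ => c ^ i * cexp (c * y) := by
  induction i with
  | zero => simp
  | succ i ih =>
    funext y
    have h : HasDerivAt (fun y : ℝ => cexp (c * y)) (cexp (c * y) * c) y := by
      simpa using ((hasDerivAt_id (y : ℂ)).const_mul c).cexp.comp_ofReal
    rw [iteratedDeriv_succ, ih, (h.const_mul (c ^ i)).deriv]
    ring

theorem norm_iteratedFDeriv_cexp_I_mul (a : ℝ) (i : ℕ) (y : ℝ) :
    ‖iteratedFDeriv ℝ i (fun y : ℝ => cexp (I * ↑(a * y))) y‖ = |a| ^ i := by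
  have hg : (fun y : ℝ => cexp (I * ↑(a * y))) = fun y : ℝ => cexp ((I * a) * y) := by
    funext y; push_cast; ring_nf
  rw [norm_iteratedFDeriv_eq_norm_iteratedDeriv, hg, iteratedDeriv_cexp_const_mul_ofReal]
  simp [Complex.norm_exp]

theorem exists_norm_iteratedFDeriv_cexp_I_mul_le {E : Type*} [NormedAddCommGroup E]
    [NormedSpace ℝ E] {u : E → ℝ} {s k : Set E} {n : ℕ} (hu : ContDiffOn ℝ n u s)
    (hs : IsOpen s) (hk : IsCompact k) (hks : k ⊆ s) :
    ∃ C > 0, ∀ (a : ℝ), ∀ x ∈ k,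
      ‖iteratedFDeriv ℝ n (fun ζ => cexp (I * ↑(a * u ζ))) x‖ ≤ C * (1 + |a|) ^ n := by
  obtain ⟨K, hK⟩ := hk.exists_bound_norm_iteratedFDerivWithin hu hs.uniqueDiffOn hks
  refine ⟨n.factorial * max K 1 ^ n, by positivity, fun a x hx => ?_⟩
  have hg : ContDiff ℝ n fun y : ℝ => cexp (I * ↑(a * y)) :=
    contDiff_exp.comp <|
      contDiff_const.mul (ofRealCLM.contDiff.comp (contDiff_const.mul contDiff_id))
  have hgu := norm_iteratedFDerivWithin_comp_le hg.contDiffOn hu le_rfl uniqueDiffOn_univ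
    hs.uniqueDiffOn (mapsTo_univ _ _) (hks hx) (C := (1 + |a|) ^ n) (D := max K 1)
    (fun i hi => by
      rw [iteratedFDerivWithin_univ, norm_iteratedFDeriv_cexp_I_mul]
      exact (pow_le_pow_left₀ (abs_nonneg a) (by linarith) i).trans
        (pow_le_pow_right₀ (by linarith [abs_nonneg a]) hi))
    (fun i hi hin => (hK i hin x hx).trans
      ((le_max_left K 1).trans (le_self_pow₀ (le_max_right K 1) (by omega))))
  rw [← iteratedFDerivWithin_of_isOpen n hs (hks hx)]
  exact hgu.trans_eq (by ring)

/-- Derivative bounds for the oscillating symbol `e^{iΩtξ₃/|ξ|}`: for every order `n = |γ|`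
there is `C = C(γ)` with `‖∂^γ e^{iΩtξ₃/|ξ|}‖ ≤ C |ξ|^{-|γ|} (1 + |Ω|t)^{|γ|}` for all
`t ≥ 0`, `Ω ∈ ℝ` and `ξ ≠ 0`. -/
theorem stmt_5 (n : ℕ) :
    ∃ C > 0, ∀ (Ω t : ℝ), 0 ≤ t → ∀ ξ : EuclideanSpace ℝ (Fin 3), ξ ≠ 0 →
      ‖iteratedFDeriv ℝ n
          (fun ζ : EuclideanSpace ℝ (Fin 3) =>
            Complex.exp (Complex.I * ((Ω * t * ζ 2 / ‖ζ‖ : ℝ) : ℂ))) ξ‖ ≤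
        C * ‖ξ‖⁻¹ ^ n * (1 + |Ω| * t) ^ n := by
  let ℓ := EuclideanSpace.proj (𝕜 := ℝ) (2 : Fin 3)
  obtain ⟨C, hC, hbound⟩ := exists_norm_iteratedFDeriv_cexp_I_mul_le
    (contDiffOn_div_norm ℓ (n := n)) isOpen_compl_singleton (isCompact_sphere 0 1)
    (fun x hx => ne_zero_of_mem_unit_sphere ⟨x, hx⟩)
  refine ⟨C, hC, fun Ω t ht ξ hξ => ?_⟩
  simp_rw [mul_div_assoc]
  have hscale : ∀ c : ℝ, 0 < c → ∀ x : EuclideanSpace ℝ (Fin 3),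
      cexp (I * ↑(Ω * t * (ℓ (c • x) / ‖c • x‖))) = cexp (I * ↑(Ω * t * (ℓ x / ‖x‖))) :=
    fun c hc x => by rw [div_norm_smul_eq ℓ hc x]
  calc _ ≤ _ := norm_iteratedFDeriv_le_of_forall_smul_eq hscale n hξ
    _ ≤ C * (1 + |Ω * t|) ^ n * ‖ξ‖⁻¹ ^ n := by
        gcongr
        refine hbound _ _ ?_
        simp [norm_smul, hξ]
    _ = C * ‖ξ‖⁻¹ ^ n * (1 + |Ω| * t) ^ n := by
        rw [abs_mul, abs_of_nonneg ht]; ring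
end
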